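/- arXiv:1403.6218 — 4 statements merged into one kernel-verified Lean document; each statement's English description precedes it below -/
import Mathlib

section
/- In the quotient ring R = ℤ[q, t₁,...,t_n][x₁,...,x_k]^{S_k} / J, where J = ⟨h_{n−k+1}(x|t), ..., h_{n−1}(x|t), h_n(x|t) + (−1)^k q⟩ with indices of t reduced mod n, the factorial complete homogeneous polynomials satisfy h_m(x|τ^{−s}t) ≡ 0 mod J for all integer shifts s and all m with n−k < m < n, and h_n(x|τ^{−s}t) ≡ h_n(x|t) mod J for all s. -/
noncomputable section

/-- Coefficient ring `ℤ[q, t₁, …, tₙ]`: `none ↦ q`, `some i ↦ t_{i+1}`. -/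
abbrev CoeffRing (n : ℕ) := MvPolynomial (Option (Fin n)) ℤ

/-- The full polynomial ring in `x₁, …, x_k` over `ℤ[q, t₁, …, tₙ]`. -/
abbrev PolyRing (n k : ℕ) := MvPolynomial (Fin k) (CoeffRing n)

/-- The quantum parameter `q`. -/
def qvar (n : ℕ) : CoeffRing n := MvPolynomial.X none

/-- The torus weight `t_j`, with index reduced mod `n`
(representatives `{1, …, n}`). -/
def tvar (n : ℕ) (hn : 0 < n) (j : ℤ) : CoeffRing n :=
  MvPolynomial.X (some ⟨((j - 1) % (n : ℤ)).toNat, by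
    have h0 : (0 : ℤ) < (n : ℤ) := by exact_mod_cast hn
    have h1 := Int.emod_nonneg (j - 1) h0.ne'
    have h2 := Int.emod_lt_of_pos (j - 1) h0
    omega⟩)

/-- The factorial complete homogeneous polynomial `h_m(x | τ^{-s} t)`:
the factorial Schur polynomial of the one-row partition `(m)`, with torus
weights shifted by `τ^{-s}` (i.e. `t_i` replaced by `t_{i-s}`). -/
def hfac (n k : ℕ) (hn : 0 < n) (m : ℕ) (s : ℤ) : PolyRing n k :=
  ∑ f ∈ Finset.univ.filter (fun f : Fin m → Fin k => ∀ a b : Fin m, a ≤ b → f a ≤ f b),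
    ∏ j : Fin m,
      (MvPolynomial.X (f j) -
        MvPolynomial.C (tvar n hn (((f j : ℕ) : ℤ) + 1 + ((j : ℕ) : ℤ) - s)))

/-- `hfac` extended to integer degrees (zero in negative degrees). -/
def hzfac (n k : ℕ) (hn : 0 < n) (m s : ℤ) : PolyRing n k :=
  if 0 ≤ m then hfac n k hn m.toNat s else 0

/-- The quantum ideal
`J = ⟨h_{n-k+1}(x|t), …, h_{n-1}(x|t), h_n(x|t) + (-1)^k q⟩`. -/
def Jideal (n k : ℕ) (hn : 0 < n) : Ideal (PolyRing n k) :=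
  Ideal.span
    (((fun m => hfac n k hn m 0) '' {m : ℕ | n - k + 1 ≤ m ∧ m ≤ n - 1}) ∪
      {hfac n k hn n 0 + (-1 : PolyRing n k) ^ k * MvPolynomial.C (qvar n)})

/-- The factorial Schur polynomial, via the factorial Jacobi–Trudi formula
`s_λ(x|t) = det (h_{λ_i + j - i}(x | τ^{1-j} t))_{1 ≤ i,j ≤ k}`. -/
def sfac (n k : ℕ) (hn : 0 < n) (lam : Fin k → ℕ) : PolyRing n k :=
  Matrix.det (Matrix.of fun i j : Fin k =>
    hzfac n k hn ((lam i : ℤ) + ((j : ℕ) : ℤ) - ((i : ℕ) : ℤ)) ((j : ℕ) : ℤ))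

/-! ### Auxiliary machinery -/

lemma tvar_congr (n : ℕ) (hn : 0 < n) {i j : ℤ} (h : i = j) : tvar n hn i = tvar n hn j := by
  rw [h]

lemma tvar_period (n : ℕ) (hn : 0 < n) (j : ℤ) : tvar n hn (j + n) = tvar n hn j := by
  have h : (j + (n:ℤ) - 1) % n = (j - 1) % n := by
    rw [show j + (n:ℤ) - 1 = (j - 1) + n * 1 by ring, Int.add_mul_emod_self_left]
  unfold tvar
  exact congrArg MvPolynomial.X (congrArg some (Fin.ext
    (show ((j + (n:ℤ) - 1) % n).toNat = ((j - 1) % (n:ℤ)).toNat from congrArg Int.toNat h)))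

/-- Truncated factorial `h`: sum over weakly increasing fillings with values `< r`. -/
def Hp (n k : ℕ) (hn : 0 < n) (m r : ℕ) (s : ℤ) : PolyRing n k :=
  ∑ f ∈ Finset.univ.filter (fun f : Fin m → Fin k =>
      (∀ a b : Fin m, a ≤ b → f a ≤ f b) ∧ ∀ j, (f j : ℕ) < r),
    ∏ j : Fin m,
      (MvPolynomial.X (f j) -
        MvPolynomial.C (tvar n hn (((f j : ℕ) : ℤ) + 1 + ((j : ℕ) : ℤ) - s)))

lemma Hp_eq_hfac (n k : ℕ) (hn : 0 < n) (m : ℕ) (s : ℤ) :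
    Hp n k hn m k s = hfac n k hn m s := by
  unfold Hp hfac
  congr 1
  apply Finset.filter_congr
  intro f _
  simp [Fin.is_lt]

lemma Hp_r_zero (n k : ℕ) (hn : 0 < n) (m : ℕ) (s : ℤ) :
    Hp n k hn (m+1) 0 s = 0 := by
  unfold Hp
  rw [Finset.filter_false_of_mem, Finset.sum_empty]
  rintro f - ⟨-, h⟩
  exact absurd (h 0) (Nat.not_lt_zero _)

lemma Hp_m_zero (n k : ℕ) (hn : 0 < n) (r : ℕ) (s : ℤ) :
    Hp n k hn 0 r s = 1 := by
  unfold Hp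
  haveI : Unique (Fin 0 → Fin k) := ⟨⟨fun j => j.elim0⟩, fun f => funext fun j => j.elim0⟩
  rw [Finset.filter_true_of_mem (fun f _ => ⟨fun a => a.elim0, fun j => j.elim0⟩)]
  rw [Finset.univ_unique, Finset.sum_singleton, Finset.prod_of_isEmpty]

lemma Hp_succ (n k : ℕ) (hn : 0 < n) (m r : ℕ) (hr : r < k) (s : ℤ) :
    Hp n k hn (m+1) (r+1) s =
      Hp n k hn (m+1) r s +
        (MvPolynomial.X (⟨r, hr⟩ : Fin k) -
            MvPolynomial.C (tvar n hn ((r : ℤ) + 1 + (m : ℤ) - s))) *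
          Hp n k hn m (r+1) s := by
  classical
  unfold Hp
  rw [← Finset.sum_filter_add_sum_filter_not
    (Finset.univ.filter (fun f : Fin (m+1) → Fin k =>
      (∀ a b : Fin (m+1), a ≤ b → f a ≤ f b) ∧ ∀ j, (f j : ℕ) < r+1))
    (fun f => (f (Fin.last m) : ℕ) < r)]
  congr 1
  · rw [Finset.filter_filter]
    congr 1
    apply Finset.filter_congr
    intro f _
    constructor
    · rintro ⟨⟨hmono, -⟩, hlast⟩
      exact ⟨hmono, fun j => lt_of_le_of_lt (hmono j (Fin.last m) (Fin.le_last j)) hlast⟩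
    · rintro ⟨hmono, hlt⟩
      exact ⟨⟨hmono, fun j => Nat.lt_succ_of_lt (hlt j)⟩, hlt (Fin.last m)⟩
  · rw [Finset.mul_sum]
    apply Finset.sum_nbij' (fun f : Fin (m+1) → Fin k => Fin.init f)
      (fun g : Fin m → Fin k => Fin.snoc g (⟨r, hr⟩ : Fin k))
    · rintro f hf
      rw [Finset.mem_filter] at hf ⊢
      obtain ⟨hf1, hf2⟩ := hf
      rw [Finset.mem_filter] at hf1
      obtain ⟨-, hmono, hlt⟩ := hf1
      exact ⟨Finset.mem_univ _,
        fun a b hab => hmono _ _ (Fin.castSucc_le_castSucc_iff.mpr hab),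
        fun j => hlt _⟩
    · rintro g hg
      rw [Finset.mem_filter] at hg ⊢
      obtain ⟨-, hmono, hlt⟩ := hg
      refine ⟨Finset.mem_filter.mpr ⟨Finset.mem_univ _, ?_, ?_⟩, ?_⟩
      · intro a b hab
        rcases Fin.eq_castSucc_or_eq_last b with ⟨b', rfl⟩ | rfl
        · rcases Fin.eq_castSucc_or_eq_last a with ⟨a', rfl⟩ | rfl
          · rw [Fin.snoc_castSucc, Fin.snoc_castSucc]
            exact hmono _ _ (Fin.castSucc_le_castSucc_iff.mp hab)
          · exact absurd hab (not_le.mpr (Fin.castSucc_lt_last b'))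
        · rcases Fin.eq_castSucc_or_eq_last a with ⟨a', rfl⟩ | rfl
          · rw [Fin.snoc_castSucc, Fin.snoc_last]
            exact Fin.le_def.mpr (Nat.lt_succ_iff.mp (hlt a'))
          · exact le_refl _
      · intro j
        rcases Fin.eq_castSucc_or_eq_last j with ⟨j', rfl⟩ | rfl
        · rw [Fin.snoc_castSucc]; exact hlt j'
        · rw [Fin.snoc_last]; exact Nat.lt_succ_self r
      · rw [Fin.snoc_last]; exact lt_irrefl r
    · rintro f hf
      rw [Finset.mem_filter, Finset.mem_filter] at hf
      obtain ⟨⟨-, -, hlt⟩, hlast⟩ := hf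
      have : f (Fin.last m) = ⟨r, hr⟩ := Fin.ext (by
        have h1 := hlt (Fin.last m); simp only [Fin.val_mk]; omega)
      rw [← this]
      exact Fin.snoc_init_self f
    · rintro g hg
      exact Fin.init_snoc _ _
    · rintro f hf
      rw [Finset.mem_filter, Finset.mem_filter] at hf
      obtain ⟨⟨-, -, hlt⟩, hlast⟩ := hf
      have hfl : f (Fin.last m) = ⟨r, hr⟩ := Fin.ext (by
        have h1 := hlt (Fin.last m); simp only [Fin.val_mk]; omega)
      rw [Fin.prod_univ_castSucc]
      rw [hfl]
      rw [mul_comm]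
      congr 1

lemma keyD (n k : ℕ) (hn : 0 < n) (m : ℕ) :
    ∀ r, r ≤ k → ∀ s : ℤ,
      Hp n k hn (m+1) r s - Hp n k hn (m+1) r (s-1) =
        (MvPolynomial.C (tvar n hn ((m : ℤ) + 1 + (r : ℤ) - s)) -
            MvPolynomial.C (tvar n hn (1 - s))) * Hp n k hn m r (s-1) := by
  induction m using Nat.strong_induction_on with
  | _ m IH =>
    intro r
    induction r with
    | zero =>
      intro _ s
      cases m with
      | zero =>
        rw [Hp_r_zero, Hp_r_zero, Hp_m_zero,
          tvar_congr n hn (show ((0:ℕ) : ℤ) + 1 + ((0:ℕ) : ℤ) - s = 1 - s by push_cast; ring)]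
        ring
      | succ m' =>
        rw [Hp_r_zero, Hp_r_zero, Hp_r_zero]
        ring
    | succ r IHr =>
      intro hrk1 s
      have hrk : r < k := hrk1
      have h2 := Hp_succ n k hn m r hrk s
      have h3 := Hp_succ n k hn m r hrk (s-1)
      have h1 := IHr hrk.le s
      cases m with
      | zero =>
        rw [Hp_m_zero] at h2 h3
        rw [Hp_m_zero] at h1
        rw [Hp_m_zero]
        rw [tvar_congr n hn (show (r:ℤ) + 1 + ((0:ℕ):ℤ) - s = ((0:ℕ):ℤ) + 1 + (r:ℤ) - s by push_cast; ring)] at h2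
        rw [tvar_congr n hn (show (r:ℤ) + 1 + ((0:ℕ):ℤ) - (s-1) = ((0:ℕ):ℤ) + 1 + ((r+1:ℕ):ℤ) - s by push_cast; ring)] at h3
        linear_combination h2 - h3 + h1
      | succ m' =>
        have h4 := IH m' (Nat.lt_succ_self m') (r+1) hrk1 s
        have h5 := Hp_succ n k hn m' r hrk (s-1)
        rw [tvar_congr n hn (show (r:ℤ) + 1 + ((m'+1:ℕ):ℤ) - s = ((m'+1:ℕ):ℤ) + 1 + (r:ℤ) - s by push_cast; ring)] at h2
        rw [tvar_congr n hn (show (r:ℤ) + 1 + ((m'+1:ℕ):ℤ) - (s-1) = ((m'+1:ℕ):ℤ) + 1 + ((r+1:ℕ):ℤ) - s by push_cast; ring)] at h3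
        rw [tvar_congr n hn (show ((m':ℕ):ℤ) + 1 + ((r+1:ℕ):ℤ) - s = ((m'+1:ℕ):ℤ) + 1 + (r:ℤ) - s by push_cast; ring)] at h4
        rw [tvar_congr n hn (show (r:ℤ) + 1 + ((m':ℕ):ℤ) - (s-1) = ((m'+1:ℕ):ℤ) + 1 + (r:ℤ) - s by push_cast; ring)] at h5
        linear_combination h2 - h3 + h1 +
          (MvPolynomial.X (⟨r, hrk⟩ : Fin k) -
              MvPolynomial.C (tvar n hn (((m'+1:ℕ):ℤ) + 1 + (r:ℤ) - s))) * h4 +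
          (MvPolynomial.C (tvar n hn (1 - s)) -
              MvPolynomial.C (tvar n hn (((m'+1:ℕ):ℤ) + 1 + (r:ℤ) - s))) * h5

lemma hfac_rec (n k : ℕ) (hn : 0 < n) (m : ℕ) (s : ℤ) :
    hfac n k hn (m+1) s - hfac n k hn (m+1) (s-1) =
      (MvPolynomial.C (tvar n hn ((m : ℤ) + 1 + (k : ℤ) - s)) -
          MvPolynomial.C (tvar n hn (1 - s))) * hfac n k hn m (s-1) := by
  have h := keyD n k hn m k le_rfl s
  rwa [Hp_eq_hfac, Hp_eq_hfac, Hp_eq_hfac] at h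

lemma mem_J_base (n k : ℕ) (hn : 0 < n) (m : ℕ) (h1 : n - k + 1 ≤ m) (h2 : m ≤ n - 1) :
    hfac n k hn m 0 ∈ Jideal n k hn :=
  Ideal.subset_span (Set.mem_union_left _ ⟨m, ⟨h1, h2⟩, rfl⟩)

lemma step_up (n k : ℕ) (hn : 0 < n) (hk : k ≤ n) (hk1 : 1 ≤ k) (s : ℤ)
    (H1 : ∀ m : ℕ, n - k < m → m < n → hfac n k hn m s ∈ Jideal n k hn)
    (H2 : hfac n k hn n s - hfac n k hn n 0 ∈ Jideal n k hn) :
    (∀ m : ℕ, n - k < m → m < n → hfac n k hn m (s+1) ∈ Jideal n k hn) ∧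
      (hfac n k hn n (s+1) - hfac n k hn n 0 ∈ Jideal n k hn) := by
  constructor
  · intro m hm1 hm2
    obtain ⟨m', rfl⟩ : ∃ m', m = m' + 1 := ⟨m - 1, by omega⟩
    have h := hfac_rec n k hn m' (s+1)
    rw [show s + 1 - 1 = s by ring] at h
    by_cases hc : n - k < m'
    · obtain ⟨c, hc'⟩ : ∃ c, hfac n k hn (m'+1) (s+1) - hfac n k hn (m'+1) s =
        c * hfac n k hn m' s := ⟨_, h⟩
      have he : hfac n k hn (m'+1) (s+1) =
          hfac n k hn (m'+1) s + c * hfac n k hn m' s := by linear_combination hc'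
      rw [he]
      exact add_mem (H1 _ hm1 hm2) (Ideal.mul_mem_left _ _ (H1 m' hc (by omega)))
    · have e : (m':ℤ) + 1 + (k:ℤ) - (s+1) = (1 - (s+1)) + (n:ℤ) := by omega
      rw [tvar_congr n hn e, tvar_period] at h
      have he : hfac n k hn (m'+1) (s+1) = hfac n k hn (m'+1) s := by linear_combination h
      rw [he]
      exact H1 _ hm1 hm2
  · have h := hfac_rec n k hn (n-1) (s+1)
    rw [show s + 1 - 1 = s by ring, show n - 1 + 1 = n by omega] at h
    by_cases hk2 : 2 ≤ k
    · obtain ⟨c, hc'⟩ : ∃ c, hfac n k hn n (s+1) - hfac n k hn n s =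
        c * hfac n k hn (n-1) s := ⟨_, h⟩
      have he : hfac n k hn n (s+1) - hfac n k hn n 0 =
          (hfac n k hn n s - hfac n k hn n 0) + c * hfac n k hn (n-1) s := by
        linear_combination hc'
      rw [he]
      exact add_mem H2 (Ideal.mul_mem_left _ _ (H1 (n-1) (by omega) (by omega)))
    · have e : ((n-1:ℕ):ℤ) + 1 + (k:ℤ) - (s+1) = (1 - (s+1)) + (n:ℤ) := by omega
      rw [tvar_congr n hn e, tvar_period] at h
      have he : hfac n k hn n (s+1) - hfac n k hn n 0 =
          hfac n k hn n s - hfac n k hn n 0 := by linear_combination h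
      rw [he]
      exact H2

lemma step_down (n k : ℕ) (hn : 0 < n) (hk : k ≤ n) (hk1 : 1 ≤ k) (s : ℤ)
    (H1 : ∀ m : ℕ, n - k < m → m < n → hfac n k hn m s ∈ Jideal n k hn)
    (H2 : hfac n k hn n s - hfac n k hn n 0 ∈ Jideal n k hn) :
    (∀ m : ℕ, n - k < m → m < n → hfac n k hn m (s-1) ∈ Jideal n k hn) ∧
      (hfac n k hn n (s-1) - hfac n k hn n 0 ∈ Jideal n k hn) := by
  have Aux : ∀ m : ℕ, n - k < m → m < n → hfac n k hn m (s-1) ∈ Jideal n k hn := by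
    intro m
    induction m using Nat.strong_induction_on with
    | _ m IHm =>
      intro hm1 hm2
      obtain ⟨m', rfl⟩ : ∃ m', m = m' + 1 := ⟨m - 1, by omega⟩
      have h := hfac_rec n k hn m' s
      by_cases hc : n - k < m'
      · obtain ⟨c, hc'⟩ : ∃ c, hfac n k hn (m'+1) s - hfac n k hn (m'+1) (s-1) =
          c * hfac n k hn m' (s-1) := ⟨_, h⟩
        have he : hfac n k hn (m'+1) (s-1) =
            hfac n k hn (m'+1) s - c * hfac n k hn m' (s-1) := by linear_combination -hc'
        rw [he]
        exact sub_mem (H1 _ hm1 hm2)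
          (Ideal.mul_mem_left _ _ (IHm m' (Nat.lt_succ_self m') hc (by omega)))
      · have e : (m':ℤ) + 1 + (k:ℤ) - s = (1 - s) + (n:ℤ) := by omega
        rw [tvar_congr n hn e, tvar_period] at h
        have he : hfac n k hn (m'+1) (s-1) = hfac n k hn (m'+1) s := by linear_combination -h
        rw [he]
        exact H1 _ hm1 hm2
  refine ⟨Aux, ?_⟩
  have h := hfac_rec n k hn (n-1) s
  rw [show n - 1 + 1 = n by omega] at h
  by_cases hk2 : 2 ≤ k
  · obtain ⟨c, hc'⟩ : ∃ c, hfac n k hn n s - hfac n k hn n (s-1) =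
      c * hfac n k hn (n-1) (s-1) := ⟨_, h⟩
    have he : hfac n k hn n (s-1) - hfac n k hn n 0 =
        (hfac n k hn n s - hfac n k hn n 0) - c * hfac n k hn (n-1) (s-1) := by
      linear_combination -hc'
    rw [he]
    exact sub_mem H2 (Ideal.mul_mem_left _ _ (Aux (n-1) (by omega) (by omega)))
  · have e : ((n-1:ℕ):ℤ) + 1 + (k:ℤ) - s = (1 - s) + (n:ℤ) := by omega
    rw [tvar_congr n hn e, tvar_period] at h
    have he : hfac n k hn n (s-1) - hfac n k hn n 0 =
        hfac n k hn n s - hfac n k hn n 0 := by linear_combination -h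
    rw [he]
    exact H2

lemma hfac_k_zero (n : ℕ) (hn : 0 < n) (m : ℕ) (s : ℤ) : hfac n 0 hn (m+1) s = 0 := by
  haveI : IsEmpty (Fin (m+1) → Fin 0) := ⟨fun f => (f 0).elim0⟩
  unfold hfac
  rw [Finset.univ_eq_empty, Finset.filter_empty, Finset.sum_empty]


/-- Quantum invariance under shift: in `R = ℤ[q,t][x]/J` (torus indices mod `n`),
`h_m(x|τ^{-s}t) ≡ 0 mod J` for all shifts `s` and all `m` with `n-k < m < n`,
and `h_n(x|τ^{-s}t) ≡ h_n(x|t) mod J` for all `s`. -/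
theorem hfac_shift_invariance (n k : ℕ) (hn : 0 < n) (hk : k ≤ n) :
    (∀ s : ℤ, ∀ m : ℕ, n - k < m → m < n → hfac n k hn m s ∈ Jideal n k hn) ∧
    (∀ s : ℤ, hfac n k hn n s - hfac n k hn n 0 ∈ Jideal n k hn) := by

  have main : ∀ s : ℤ,
      (∀ m : ℕ, n - k < m → m < n → hfac n k hn m s ∈ Jideal n k hn) ∧
        (hfac n k hn n s - hfac n k hn n 0 ∈ Jideal n k hn) := by
    by_cases hk0 : k = 0
    · subst hk0
      intro s
      refine ⟨fun m h1 h2 => absurd h1 (by omega), ?_⟩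
      have hz : ∀ u : ℤ, hfac n 0 hn n u = 0 := by
        intro u
        have := hfac_k_zero n hn (n-1) u
        rwa [show n - 1 + 1 = n by omega] at this
      rw [hz s, hz 0, sub_self]
      exact zero_mem _
    · have hk1 : 1 ≤ k := by omega
      intro s
      induction s using Int.induction_on with
      | zero =>
        exact ⟨fun m h1 h2 => mem_J_base n k hn m (by omega) (by omega),
          by rw [sub_self]; exact zero_mem _⟩
      | succ i ih => exact step_up n k hn hk hk1 i ih.1 ih.2
      | pred i ih => exact step_down n k hn hk hk1 (-i) ih.1 ih.2
  exact ⟨fun s => (main s).1, fun s => (main s).2⟩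
end
end

section
/- In the ring R = ℤ[q, t₁,...,t_n][x₁,...,x_k]^{S_k} / J with J = ⟨h_{n−k+1}(x|t), ..., h_{n−1}(x|t), h_n(x|t)+(−1)^k q⟩ and torus indices reduced mod n, one has h_{nd+j}(x|t) ≡ (−1)^{d(k−1)} q^d h_j(x|t) mod J for all d ≥ 1 and 0 ≤ j ≤ n−1. -/
/-!
For `s ≥ 1` the factorial polynomials satisfy
`∑_{r=0}^{k} (-1)^r e_r(x | τ^{s-1} t) h_{s-r}(x | t) = 0`: expand both factors into pairs
`(C, l)` of a subset `C` and a weakly decreasing word `l`, and cancel them by the sign-reversing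
involution that moves the head of `l` into `C` when it exceeds `max C`, and `max C` onto `l`
otherwise; the two linear factors exchanged carry the same weight because `#C + |l| = s`.

The weights are `n`-periodic, so `e_r(x | τ^{s-1} t)` depends only on `s mod n`, and subtracting
the identities for `s + n` and `s` shows by strong induction that
`h_{s+n} ≡ (-1)^{k+1} q h_s` modulo `J`: the induction is anchored by the generators of `J`,
which say exactly this for `s = 1 - k, …, 0`. Iterating `d` times and using
`(-1)^{(k+1)d} = (-1)^{d(k-1)}` gives the claim; for `k = 0` the ideal contains `q` itself.
-/

noncomputable section

open Finset

namespace FactorialSchur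

section Identity

variable {R : Type*} [CommRing R] {k : ℕ} (x : Fin k → R) (t : ℤ → R)

/-- A weakly decreasing word `l` stands for the weakly increasing index sequence `l.reverse`,
so its head sits at the last position `l.length - 1`. -/
def hWord : List (Fin k) → R
  | [] => 1
  | a :: l => (x a - t (a + 1 + l.length)) * hWord l

def sortedWords (k m : ℕ) : Finset (List (Fin k)) :=
  ((univ : Finset (Fin m → Fin k)).image List.ofFn).filter (·.Pairwise (· ≥ ·))

lemma mem_sortedWords {m : ℕ} {l : List (Fin k)} :
    l ∈ sortedWords k m ↔ l.Pairwise (· ≥ ·) ∧ l.length = m := by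
  simp only [sortedWords, mem_filter, mem_image, mem_univ, true_and]
  constructor
  · rintro ⟨⟨f, rfl⟩, hl⟩
    exact ⟨hl, List.length_ofFn⟩
  · rintro ⟨hl, rfl⟩
    exact ⟨⟨l.get, List.ofFn_get l⟩, hl⟩

/-- `h_m(x | t)`, for arbitrary variables `x` and weights `t`. -/
def hfacOf (m : ℕ) : R :=
  ∑ l ∈ sortedWords k m, hWord x t l

lemma hWord_ofFn_rev {m : ℕ} (f : Fin m → Fin k) :
    hWord x t (List.ofFn fun i => f i.rev) = ∏ j, (x (f j) - t (f j + 1 + j)) := by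
  induction m with
  | zero => simp [hWord]
  | succ m ih =>
    simp only [List.ofFn_succ, Fin.rev_succ, Fin.rev_zero, hWord, List.length_ofFn,
      Fin.prod_univ_castSucc, Fin.val_last, Fin.val_castSucc]
    rw [ih fun i => f i.castSucc, mul_comm]

lemma hfacOf_eq_sum_monotone (m : ℕ) :
    hfacOf x t m = ∑ f ∈ univ.filter (fun f : Fin m → Fin k => ∀ a b, a ≤ b → f a ≤ f b),
      ∏ j, (x (f j) - t (f j + 1 + j)) := by
  symm
  refine sum_nbij (fun f => List.ofFn fun i => f i.rev) (fun f hf => ?_) (fun f _ g _ hfg => ?_)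
    (fun l hl => ?_) (fun f _ => (hWord_ofFn_rev x t f).symm)
  · simp only [mem_filter, mem_univ, true_and] at hf
    simp only [mem_sortedWords, List.pairwise_ofFn, List.length_ofFn, and_true]
    exact fun i j hij => hf _ _ (Fin.rev_le_rev.2 hij.le)
  · funext i
    simpa using congrFun (List.ofFn_injective hfg) i.rev
  · obtain ⟨hsorted, hlen⟩ := mem_sortedWords.1 hl
    subst hlen
    refine ⟨fun i => l.get i.rev, ?_, by simp⟩
    simp only [coe_filter, mem_univ, true_and, Set.mem_ofPred_eq]
    intro a b hab
    rcases hab.lt_or_eq with hab | rfl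
    · exact List.pairwise_iff_get.1 hsorted _ _ (Fin.rev_lt_rev.2 hab)
    · rfl

/-- The term of `e_{#C}(x | τ^{s-1} t)` indexed by the subset `C`. -/
def eSubset (s : ℤ) (C : Finset (Fin k)) : R :=
  ∏ c ∈ C, (x c - t (c + 1 - #(C.filter (· ≤ c)) + s))

/-- `e_r(x | τ^{s-1} t)`. -/
def efacOf (s : ℤ) (r : ℕ) : R :=
  ∑ C ∈ powersetCard r univ, eSubset x t s C

lemma efacOf_zero (s : ℤ) : efacOf x t s 0 = 1 := by
  simp [efacOf, eSubset]

lemma efacOf_add_of_periodic {n : ℤ} (ht : Function.Periodic t n) (s : ℤ) (r : ℕ) :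
    efacOf x t (s + n) r = efacOf x t s r := by
  simp only [efacOf, eSubset, ← add_assoc, ht _]

lemma eSubset_insert (s : ℤ) {C : Finset (Fin k)} {a : Fin k} (ha : ∀ c ∈ C, c < a) :
    eSubset x t s (insert a C) = (x a - t (a + 1 - (#C + 1) + s)) * eSubset x t s C := by
  have ha' : a ∉ C := fun h => lt_irrefl a (ha a h)
  rw [eSubset, prod_insert ha', eSubset]
  congr 1
  · rw [filter_true_of_mem fun c hc => (mem_insert.mp hc).elim le_of_eq fun hc => (ha c hc).le,
      card_insert_of_notMem ha']
    push_cast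
    ring_nf
  · refine prod_congr rfl fun c hc => ?_
    rw [filter_insert, if_neg (not_le.mpr (ha c hc))]

/-- Signed terms of `∑ r, (-1)^r e_r(x | τ^{s-1} t) h_{s-r}(x | t)`. -/
def weight (s : ℤ) (p : Finset (Fin k) × List (Fin k)) : R :=
  (-1) ^ #p.1 * eSubset x t s p.1 * hWord x t p.2

lemma weight_insert_add_weight_cons {C : Finset (Fin k)} {a : Fin k} {l : List (Fin k)}
    (ha : ∀ c ∈ C, c < a) :
    weight x t (#C + 1 + l.length) (insert a C, l) +
      weight x t (#C + 1 + l.length) (C, a :: l) = 0 := by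
  simp only [weight, hWord, eSubset_insert x t _ ha,
    card_insert_of_notMem fun h => lt_irrefl a (ha a h)]
  ring_nf

def pairs (k s : ℕ) : Finset (Finset (Fin k) × List (Fin k)) :=
  ((range (k + 1)).filter (· ≤ s)).biUnion fun r => powersetCard r univ ×ˢ sortedWords k (s - r)

lemma mem_pairs {s : ℕ} {p : Finset (Fin k) × List (Fin k)} :
    p ∈ pairs k s ↔ p.2.Pairwise (· ≥ ·) ∧ #p.1 + p.2.length = s := by
  simp only [pairs, mem_biUnion, mem_filter, mem_range, mem_product, mem_powersetCard_univ,
    mem_sortedWords]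
  constructor
  · rintro ⟨r, ⟨-, hrs⟩, rfl, hl, hlen⟩
    exact ⟨hl, by omega⟩
  · rintro ⟨hl, hlen⟩
    have := card_le_univ p.1
    rw [Fintype.card_fin] at this
    exact ⟨#p.1, ⟨by omega, by omega⟩, rfl, hl, by omega⟩

lemma cons_mem_pairs_iff {s : ℕ} {C : Finset (Fin k)} {a : Fin k} {l : List (Fin k)}
    (ha : ∀ c ∈ C, c < a) (hl : ∀ b ∈ l, b ≤ a) :
    (C, a :: l) ∈ pairs k s ↔ (insert a C, l) ∈ pairs k s := by
  simp only [mem_pairs, List.pairwise_cons, List.length_cons,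
    card_insert_of_notMem fun h => lt_irrefl a (ha a h)]
  constructor
  · rintro ⟨⟨-, hl⟩, hlen⟩
    exact ⟨hl, by omega⟩
  · rintro ⟨hl', hlen⟩
    exact ⟨⟨hl, hl'⟩, by omega⟩

def popMax (C : Finset (Fin k)) (l : List (Fin k)) : Finset (Fin k) × List (Fin k) :=
  if h : C.Nonempty then (C.erase (C.max' h), C.max' h :: l) else (C, l)

def toggle : Finset (Fin k) × List (Fin k) → Finset (Fin k) × List (Fin k)
  | (C, []) => popMax C []
  | (C, a :: l) => if ∀ c ∈ C, c < a then (insert a C, l) else popMax C (a :: l)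

lemma toggle_cons {C : Finset (Fin k)} {a : Fin k} {l : List (Fin k)} (ha : ∀ c ∈ C, c < a) :
    toggle (C, a :: l) = (insert a C, l) :=
  if_pos ha

lemma popMax_insert {C : Finset (Fin k)} {a : Fin k} (l : List (Fin k)) (ha : ∀ c ∈ C, c < a) :
    popMax (insert a C) l = (C, a :: l) := by
  have hmax : (insert a C).max' (insert_nonempty a C) = a :=
    le_antisymm ((max'_le_iff _ _).2 fun c hc => (mem_insert.1 hc).elim le_of_eq fun hc =>
      (ha c hc).le) (le_max' _ a (mem_insert_self a C))
  rw [popMax, dif_pos (insert_nonempty a C), hmax, erase_insert fun h => lt_irrefl a (ha a h)]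

lemma toggle_insert {C : Finset (Fin k)} {a : Fin k} {l : List (Fin k)}
    (ha : ∀ c ∈ C, c < a) (hl : ∀ b ∈ l, b ≤ a) :
    toggle (insert a C, l) = (C, a :: l) := by
  rcases l with _ | ⟨b, l⟩
  · exact popMax_insert [] ha
  · rw [toggle, if_neg fun h => (h a (mem_insert_self a C)).not_ge (hl b List.mem_cons_self)]
    exact popMax_insert _ ha

lemma exists_eq_cons_or_eq_insert {s : ℕ} (hs : 1 ≤ s) {p : Finset (Fin k) × List (Fin k)}
    (hp : p ∈ pairs k s) :
    ∃ C a l, (∀ c ∈ C, c < a) ∧ (∀ b ∈ l, b ≤ a) ∧ (p = (C, a :: l) ∨ p = (insert a C, l)) := by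
  obtain ⟨C, l⟩ := p
  rw [mem_pairs] at hp
  obtain ⟨hl, hlen⟩ := hp
  have popped (hne : C.Nonempty) (hl : ∀ b ∈ l, b ≤ C.max' hne) :
      ∃ C' a l', (∀ c ∈ C', c < a) ∧ (∀ b ∈ l', b ≤ a) ∧
        ((C, l) = (C', a :: l') ∨ (C, l) = (insert a C', l')) :=
    ⟨C.erase (C.max' hne), C.max' hne, l, fun c => C.lt_max'_of_mem_erase_max' hne, hl,
      Or.inr (by rw [insert_erase (C.max'_mem hne)])⟩
  rcases l with _ | ⟨a, l⟩
  · exact popped (card_pos.1 (by simp at hlen; omega)) (by simp)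
  by_cases hC : ∀ c ∈ C, c < a
  · exact ⟨C, a, l, hC, fun b hb => List.rel_of_pairwise_cons hl hb, Or.inl rfl⟩
  · push Not at hC
    obtain ⟨c, hc, hac⟩ := hC
    have hne : C.Nonempty := ⟨c, hc⟩
    have haM : a ≤ C.max' hne := hac.trans (C.le_max' c hc)
    refine popped hne fun b hb => ?_
    rcases List.mem_cons.1 hb with rfl | hb
    · exact haM
    · exact (List.rel_of_pairwise_cons hl hb).trans haM

lemma sum_weight_pairs_eq_zero {s : ℕ} (hs : 1 ≤ s) :
    ∑ p ∈ pairs k s, weight x t s p = 0 := by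
  have key (p) (hp : p ∈ pairs k s) : ∃ C a l, (∀ c ∈ C, c < a) ∧ (∀ b ∈ l, b ≤ a) ∧
      s = #C + 1 + l.length ∧ (C, a :: l) ∈ pairs k s ∧
      (p = (C, a :: l) ∨ p = (insert a C, l)) := by
    obtain ⟨C, a, l, hC, hl, hp'⟩ := exists_eq_cons_or_eq_insert hs hp
    have hcons : (C, a :: l) ∈ pairs k s := by
      rcases hp' with rfl | rfl
      exacts [hp, (cons_mem_pairs_iff hC hl).2 hp]
    have hlen := (mem_pairs.1 hcons).2
    simp only [List.length_cons] at hlen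
    exact ⟨C, a, l, hC, hl, by omega, hcons, hp'⟩
  refine sum_involution (fun p _ => toggle p) (fun p hp => ?_) (fun p hp _ => ?_)
    (fun p hp => ?_) (fun p hp => ?_) <;>
  obtain ⟨C, a, l, hC, hl, rfl, hcons, rfl | rfl⟩ := key p hp
  · rw [toggle_cons hC, add_comm]
    exact_mod_cast weight_insert_add_weight_cons x t hC
  · rw [toggle_insert hC hl]
    exact_mod_cast weight_insert_add_weight_cons x t hC
  · rw [toggle_cons hC]
    simp
  · rw [toggle_insert hC hl]
    simp
  · rw [toggle_cons hC]
    exact (cons_mem_pairs_iff hC hl).1 hcons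
  · rwa [toggle_insert hC hl]
  · simp only [toggle_cons hC, toggle_insert hC hl]
  · simp only [toggle_insert hC hl, toggle_cons hC]

lemma sum_weight_pairs (s : ℕ) :
    ∑ p ∈ pairs k s, weight x t s p =
      ∑ r ∈ (range (k + 1)).filter (· ≤ s), (-1) ^ r * efacOf x t s r * hfacOf x t (s - r) := by
  rw [pairs, sum_biUnion]
  · refine sum_congr rfl fun r _ => ?_
    rw [sum_product, efacOf, hfacOf, mul_assoc, sum_mul_sum, mul_sum]
    refine sum_congr rfl fun C hC => ?_
    rw [← (mem_powersetCard_univ.1 hC), mul_sum]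
    simp only [weight, mul_assoc]
  · intro r _ r' _ hrr'
    refine disjoint_left.2 fun p hp hp' => hrr' ?_
    rw [mem_product, mem_powersetCard_univ] at hp hp'
    rw [← hp.1, ← hp'.1]

theorem sum_efacOf_mul_hfacOf_eq_zero {s : ℕ} (hs : 1 ≤ s) :
    ∑ r ∈ (range (k + 1)).filter (· ≤ s), (-1) ^ r * efacOf x t s r * hfacOf x t (s - r) = 0 := by
  rw [← sum_weight_pairs, sum_weight_pairs_eq_zero x t hs]

end Identity

section QuantumIdeal

open MvPolynomial

variable {n k : ℕ} {hn : 0 < n}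

lemma tvar_periodic : Function.Periodic (tvar n hn) n := by
  intro j
  simp only [tvar, add_sub_right_comm j, Int.add_emod_right]

variable (n k hn) in
def tweight (j : ℤ) : PolyRing n k := C (tvar n hn j)

lemma tweight_periodic : Function.Periodic (tweight n k hn) n := fun j => by
  rw [tweight, tweight, tvar_periodic]

lemma hfac_eq_hfacOf (m : ℕ) : hfac n k hn m 0 = hfacOf X (tweight n k hn) m := by
  simp only [hfac, hfacOf_eq_sum_monotone, tweight, sub_zero]

lemma sum_efacOf_mul_hzfac_eq_zero {s : ℤ} (hs : 0 < s) :
    ∑ r ∈ range (k + 1), (-1) ^ r * efacOf X (tweight n k hn) s r * hzfac n k hn (s - r) 0 = 0 := by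
  lift s to ℕ using hs.le
  rw [← sum_efacOf_mul_hfacOf_eq_zero X (tweight n k hn) (s := s) (by omega), sum_filter]
  refine sum_congr rfl fun r _ => ?_
  split_ifs with hr
  · rw [hzfac, if_pos (by omega), ← hfac_eq_hfacOf, show ((s : ℤ) - r).toNat = s - r by omega]
  · rw [hzfac, if_neg (by omega), mul_zero]

lemma hfac_zero (s : ℤ) : hfac n k hn 0 s = 1 := by
  simp [hfac]

lemma hfac_of_k_eq_zero {m : ℕ} (hm : m ≠ 0) (s : ℤ) : hfac n 0 hn m s = 0 := by
  have : IsEmpty (Fin m → Fin 0) := ⟨fun f => (f ⟨0, Nat.pos_of_ne_zero hm⟩).elim0⟩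
  simp [hfac]

lemma hzfac_natCast (m : ℕ) : hzfac n k hn m 0 = hfac n k hn m 0 := by
  simp [hzfac]

lemma hzfac_of_neg {m : ℤ} (hm : m < 0) : hzfac n k hn m 0 = 0 :=
  if_neg hm.not_ge

lemma hfac_mem_Jideal {m : ℕ} (h₁ : n - k + 1 ≤ m) (h₂ : m ≤ n - 1) :
    hfac n k hn m 0 ∈ Jideal n k hn :=
  Ideal.subset_span (Or.inl ⟨m, ⟨h₁, h₂⟩, rfl⟩)

lemma hfac_add_neg_one_pow_mul_qvar_mem_Jideal :
    hfac n k hn n 0 + (-1) ^ k * C (qvar n) ∈ Jideal n k hn :=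
  Ideal.subset_span (Or.inr rfl)

lemma qvar_mem_Jideal_of_k_eq_zero : C (qvar n) ∈ Jideal n 0 hn := by
  simpa [hfac_of_k_eq_zero hn.ne'] using hfac_add_neg_one_pow_mul_qvar_mem_Jideal (k := 0) (hn := hn)

lemma hfac_self_sub_mem_Jideal :
    hfac n k hn n 0 - (-1) ^ (k + 1) * C (qvar n) * hfac n k hn 0 0 ∈ Jideal n k hn := by
  convert hfac_add_neg_one_pow_mul_qvar_mem_Jideal (hn := hn) using 1
  rw [hfac_zero]
  ring

theorem hzfac_add_sub_mem_Jideal (hk : k ≤ n) {m : ℤ} (hm : -(k : ℤ) < m) :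
    hzfac n k hn (m + n) 0 - (-1) ^ (k + 1) * C (qvar n) * hzfac n k hn m 0 ∈ Jideal n k hn := by
  induction m using Int.strongRec (m := 1) with
  | lt m hm1 =>
    rcases (show m ≤ 0 by omega).lt_or_eq with hneg | rfl
    · rw [hzfac_of_neg hneg, mul_zero, sub_zero,
        show m + n = ((m + n).toNat : ℕ) by omega, hzfac_natCast]
      exact hfac_mem_Jideal (by omega) (by omega)
    · have h₀ : hzfac n k hn 0 0 = hfac n k hn 0 0 := hzfac_natCast 0
      rw [zero_add, hzfac_natCast, h₀]
      exact hfac_self_sub_mem_Jideal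
  | ge m hm1 ih =>
    set c : PolyRing n k := (-1) ^ (k + 1) * C (qvar n)
    let E (r : ℕ) := efacOf X (tweight n k hn) m r
    let H (z : ℤ) := hzfac n k hn z 0
    have hsum : ∑ r ∈ range (k + 1), (-1) ^ r * E r * (H (m - r + n) - c * H (m - r)) = 0 := by
      have h₁ := sum_efacOf_mul_hzfac_eq_zero (n := n) (k := k) (hn := hn) (s := m + n) (by omega)
      have h₂ := sum_efacOf_mul_hzfac_eq_zero (n := n) (k := k) (hn := hn) (s := m) (by omega)
      simp only [efacOf_add_of_periodic _ _ tweight_periodic] at h₁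
      calc _ = ∑ r ∈ range (k + 1), (-1) ^ r * E r * H (m + n - r) -
              c * ∑ r ∈ range (k + 1), (-1) ^ r * E r * H (m - r) := by
            rw [mul_sum, ← sum_sub_distrib]
            refine sum_congr rfl fun r _ => ?_
            rw [sub_add_eq_add_sub]
            ring
        _ = 0 := by simp only [E, H, h₁, h₂, mul_zero, sub_zero]
    simp only [sum_range_succ', E, H, Nat.cast_zero, sub_zero, pow_zero, efacOf_zero,
      one_mul] at hsum
    rw [← neg_eq_of_add_eq_zero_right hsum]
    refine neg_mem (sum_mem fun r hr => Ideal.mul_mem_left _ _ (ih _ ?_ ?_)) <;>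
      · have := mem_range.1 hr
        omega

theorem hfac_add_sub_mem_Jideal (hk : k ≤ n) (m : ℕ) :
    hfac n k hn (m + n) 0 - (-1) ^ (k + 1) * C (qvar n) * hfac n k hn m 0 ∈ Jideal n k hn := by
  rcases m.eq_zero_or_pos with rfl | hm
  · rw [zero_add]
    exact hfac_self_sub_mem_Jideal
  · simpa only [← Nat.cast_add, hzfac_natCast] using
      hzfac_add_sub_mem_Jideal (hn := hn) hk (m := m) (by omega)

theorem hfac_mul_add_sub_mem_Jideal (hk : k ≤ n) (d j : ℕ) :
    hfac n k hn (n * d + j) 0 - ((-1) ^ (k + 1) * C (qvar n)) ^ d * hfac n k hn j 0 ∈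
      Jideal n k hn := by
  induction d with
  | zero => simp
  | succ d ih =>
    have step := hfac_add_sub_mem_Jideal (hn := hn) hk (n * d + j)
    rw [show n * d + j + n = n * (d + 1) + j by ring] at step
    convert add_mem step (Ideal.mul_mem_left _ ((-1) ^ (k + 1) * C (qvar n)) ih) using 1
    ring

end QuantumIdeal

end FactorialSchur

open FactorialSchur

/-- In `R = ℤ[q,t][x]/J` with torus indices reduced mod `n`:
`h_{nd+j}(x|t) ≡ (-1)^{d(k-1)} q^d h_j(x|t) mod J` for all `d ≥ 1`, `0 ≤ j ≤ n-1`. -/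
theorem hfac_high_degree_reduction (n k : ℕ) (hn : 0 < n) (hk : k ≤ n) :
    ∀ d : ℕ, 1 ≤ d → ∀ j : ℕ, j ≤ n - 1 →
      hfac n k hn (n * d + j) 0 -
        (-1 : PolyRing n k) ^ (d * (k - 1)) * (MvPolynomial.C (qvar n)) ^ d *
          hfac n k hn j 0 ∈ Jideal n k hn := by
  intro d hd j _
  rcases k with _ | k
  · rw [hfac_of_k_eq_zero (by have := Nat.mul_pos hn hd; omega)]
    exact sub_mem (zero_mem _) (Ideal.mul_mem_right _ _ (Ideal.mul_mem_left _ _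
      (Ideal.pow_mem_of_mem _ qvar_mem_Jideal_of_k_eq_zero _ hd)))
  · have hsign : ((-1 : PolyRing n (k + 1)) ^ (k + 1 + 1) * MvPolynomial.C (qvar n)) ^ d =
        (-1) ^ (d * (k + 1 - 1)) * MvPolynomial.C (qvar n) ^ d := by
      rw [Nat.add_sub_cancel]
      ring
    simpa only [hsign] using hfac_mul_add_sub_mem_Jideal (hn := hn) hk d j
end
end

section
/- Let λ = (λ₁, ..., λ_k) be a partition with λ₁ = n−k and all λ_i > 0, let λ̄ = (n−k+1, λ₂, ..., λ_k) and λ⁻ = (λ₂−1, ..., λ_k−1, 0). Then in the ring R = ℤ[q,t₁,...,t_n][x]^{S_k}/J (torus indices mod n), s_{λ̄}(x|t) ≡ q · s_{λ⁻}(x|t) mod J. -/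
/-!
Shifting the torus parameters of a factorial complete homogeneous polynomial changes it by a
multiple of one of lower degree:
`h_{m+1}(x | τ^{-s-1} t) = h_{m+1}(x | τ^{-s} t) + (t_{m+k-s} - t_{-s}) h_m(x | τ^{-s} t)`.
By induction on `s`, the generators of `J` give `h_d(x | τ^{-s} t) ∈ J` for
`n - k + 1 + s ≤ d ≤ n - 1`, and `h_n(x | τ^{-s} t) ≡ -(-1)^k q` modulo `J` for `s < k`.
So modulo `J` the first row of the Jacobi–Trudi matrix of `λ̄` is `(0, …, 0, (-1)^{k-1} q)`;
expanding along it leaves `q` times the minor obtained by deleting the first row and last column,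
which is the Jacobi–Trudi matrix of `λ⁻` with its last row `(0, …, 0, 1)` and last column
removed.
-/

noncomputable section

open MvPolynomial Finset

lemma Fin.monotone_snoc_iff {α : Type*} [Preorder α] {m : ℕ} (g : Fin m → α) (a : α) :
    Monotone (Fin.snoc g a : Fin (m + 1) → α) ↔ Monotone g ∧ ∀ j, g j ≤ a := by
  constructor
  · intro h
    exact ⟨fun i j hij => by simpa using h (Fin.castSucc_le_castSucc_iff.mpr hij),
      fun j => by simpa using h (Fin.le_last j.castSucc)⟩
  · rintro ⟨hg, ha⟩ i j hij
    induction j using Fin.lastCases with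
    | last =>
      induction i using Fin.lastCases with
      | last => simp
      | cast i => simpa using ha i
    | cast j =>
      induction i using Fin.lastCases with
      | last => exact absurd hij (not_le.mpr (Fin.castSucc_lt_last j))
      | cast i => simpa using hg (Fin.castSucc_le_castSucc_iff.mp hij)

lemma Monotone.forall_val_lt_iff_last {k m : ℕ} {f : Fin (m + 1) → Fin k} (hf : Monotone f)
    {c : ℕ} : (∀ j, (f j : ℕ) < c) ↔ (f (Fin.last m) : ℕ) < c :=
  ⟨fun h => h _, fun h j => lt_of_le_of_lt (hf (Fin.le_last j)) h⟩

namespace Matrix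

variable {R : Type*} [CommRing R] {m : ℕ}

lemma det_eq_of_row_zero_eq_single (A : Matrix (Fin (m + 1)) (Fin (m + 1)) R) {c : R}
    (hA : A 0 = Pi.single (Fin.last m) ((-1) ^ m * c)) :
    A.det = c * (A.submatrix Fin.succ Fin.castSucc).det := by
  rw [det_succ_row_zero, Finset.sum_eq_single (Fin.last m)]
  · simp [hA, ← mul_assoc, ← mul_pow]
  · intro j _ hj
    simp [hA, hj]
  · simp

lemma _root_.RingHom.map_det_eq_of_map_row_zero_eq_single {S : Type*} [CommRing S] (f : R →+* S)
    (A : Matrix (Fin (m + 1)) (Fin (m + 1)) R) {c : S}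
    (hA : A.map f 0 = Pi.single (Fin.last m) ((-1) ^ m * c)) :
    f A.det = c * f (A.submatrix Fin.succ Fin.castSucc).det := by
  rw [f.map_det, f.map_det, RingHom.mapMatrix_apply, det_eq_of_row_zero_eq_single _ hA,
    submatrix_map, RingHom.mapMatrix_apply]

lemma det_eq_of_row_last_eq_single (A : Matrix (Fin (m + 1)) (Fin (m + 1)) R)
    (hA : A (Fin.last m) = Pi.single (Fin.last m) 1) :
    A.det = (A.submatrix Fin.castSucc Fin.castSucc).det := by
  rw [det_succ_row A (Fin.last m), Finset.sum_eq_single (Fin.last m)]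
  · simp [hA, ← two_mul, pow_mul]
  · intro j _ hj
    simp [hA, hj]
  · simp

end Matrix

/-- `h_m(x₁, …, x_b | τ^{-s} t)`: `hfac` restricted to the first `b` variables. -/
def hfacBelow (n k : ℕ) (hn : 0 < n) (m : ℕ) (s : ℤ) (b : ℕ) : PolyRing n k :=
  ∑ f ∈ univ.filter (fun f : Fin m → Fin k => Monotone f ∧ ∀ j, (f j : ℕ) < b),
    ∏ j : Fin m, (X (f j) - C (tvar n hn ((f j : ℕ) + 1 + (j : ℕ) - s)))

section FactorialComplete

variable {n k : ℕ} (hn : 0 < n)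

lemma hfac_eq_hfacBelow (m : ℕ) (s : ℤ) : hfac n k hn m s = hfacBelow n k hn m s k :=
  sum_congr (filter_congr fun f _ =>
      ⟨fun h => ⟨fun a b => h a b, fun j => (f j).isLt⟩, fun h a b => @h.1 a b⟩)
    fun _ _ => rfl

lemma hfacBelow_zero (s : ℤ) (b : ℕ) : hfacBelow n k hn 0 s b = 1 := by
  simp [hfacBelow, Subsingleton.monotone]

lemma hfacBelow_succ_zero (m : ℕ) (s : ℤ) : hfacBelow n k hn (m + 1) s 0 = 0 := by
  simp [hfacBelow]

lemma hfacBelow_succ_succ (m : ℕ) (s : ℤ) {b : ℕ} (hb : b < k) :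
    hfacBelow n k hn (m + 1) s (b + 1) = hfacBelow n k hn (m + 1) s b +
      (X ⟨b, hb⟩ - C (tvar n hn (b + m + 1 - s))) * hfacBelow n k hn m s (b + 1) := by
  unfold hfacBelow
  rw [← sum_filter_add_sum_filter_not _ (fun f => f (Fin.last m) ≠ ⟨b, hb⟩),
    filter_filter, filter_filter]
  congr 1
  · refine sum_congr (filter_congr fun f _ => ?_) fun _ _ => rfl
    rw [and_assoc]
    refine and_congr_right fun hf => ?_
    rw [hf.forall_val_lt_iff_last, hf.forall_val_lt_iff_last, Ne, Fin.ext_iff]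
    dsimp only
    omega
  · rw [mul_sum]
    refine sum_nbij' Fin.init (Fin.snoc · ⟨b, hb⟩) ?_ ?_ ?_ ?_ ?_
    · simp only [mem_filter, mem_univ, true_and, not_not]
      rintro f ⟨⟨hf, hlt⟩, hlast⟩
      rw [← Fin.snoc_init_self f, hlast, Fin.monotone_snoc_iff] at hf
      exact ⟨hf.1, fun j => hlt _⟩
    · simp only [mem_filter, mem_univ, true_and, not_not]
      rintro g ⟨hg, hlt⟩
      have hmono : Monotone (Fin.snoc g ⟨b, hb⟩ : Fin (m + 1) → Fin k) :=
        (Fin.monotone_snoc_iff g _).2 ⟨hg, fun j => Nat.lt_succ_iff.mp (hlt j)⟩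
      refine ⟨⟨hmono, ?_⟩, Fin.snoc_last _ _⟩
      rw [hmono.forall_val_lt_iff_last, Fin.snoc_last]
      exact Nat.lt_succ_self b
    · simp only [mem_filter, not_not]
      rintro f ⟨_, _, hlast⟩
      rw [← hlast, Fin.snoc_init_self]
    · intro g _
      exact Fin.init_snoc _ _
    · simp only [mem_filter, not_not]
      rintro f ⟨_, _, hlast⟩
      rw [Fin.prod_univ_castSucc, hlast, mul_comm]
      simp only [Fin.val_last, Fin.val_castSucc, Fin.init]
      ring_nf

lemma hfacBelow_shift {b : ℕ} (hb : b ≤ k) (m : ℕ) (s : ℤ) :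
    hfacBelow n k hn (m + 1) (s + 1) b = hfacBelow n k hn (m + 1) s b +
      (C (tvar n hn (m + b - s)) - C (tvar n hn (-s))) * hfacBelow n k hn m s b := by
  induction b generalizing m with
  | zero => cases m <;> simp [hfacBelow_zero, hfacBelow_succ_zero]
  | succ b ih =>
    have hbk : b < k := hb
    induction m with
    | zero =>
      have h1 := hfacBelow_succ_succ hn 0 (s + 1) hbk
      have h2 := hfacBelow_succ_succ hn 0 s hbk
      have h3 := ih hbk.le 0
      simp only [hfacBelow_zero] at h1 h2 h3 ⊢
      linear_combination (norm := (push_cast; ring_nf)) h1 + h3 - h2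
    | succ m ihm =>
      linear_combination (norm := (push_cast; ring_nf))
        hfacBelow_succ_succ hn (m + 1) (s + 1) hbk + ih hbk.le (m + 1)
          + (X ⟨b, hbk⟩ - C (tvar n hn (b + m + 1 - s))) * ihm
          - hfacBelow_succ_succ hn (m + 1) s hbk
          - (C (tvar n hn (b + m + 1 - s)) - C (tvar n hn (-s))) * hfacBelow_succ_succ hn m s hbk

lemma hfac_succ_shift (m : ℕ) (s : ℤ) :
    hfac n k hn (m + 1) (s + 1) = hfac n k hn (m + 1) s +
      (C (tvar n hn (m + k - s)) - C (tvar n hn (-s))) * hfac n k hn m s := by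
  simp only [hfac_eq_hfacBelow]
  exact hfacBelow_shift hn le_rfl m s

lemma hzfac_natCast (d : ℕ) (s : ℤ) : hzfac n k hn d s = hfac n k hn d s := by
  simp [hzfac]

lemma hzfac_of_neg {d : ℤ} (hd : d < 0) (s : ℤ) : hzfac n k hn d s = 0 :=
  if_neg hd.not_ge

lemma hzfac_zero (s : ℤ) : hzfac n k hn 0 s = 1 := by
  rw [← Nat.cast_zero, hzfac_natCast, hfac_eq_hfacBelow, hfacBelow_zero]

end FactorialComplete

section QuantumIdeal

variable {n k : ℕ} (hn : 0 < n)

lemma hfac_mem_Jideal (s : ℕ) {d : ℕ} (hd : n - k + 1 + s ≤ d) (hd' : d ≤ n - 1) :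
    hfac n k hn d s ∈ Jideal n k hn := by
  induction s generalizing d with
  | zero => exact Ideal.subset_span (Or.inl ⟨d, ⟨by omega, hd'⟩, rfl⟩)
  | succ s ih =>
    obtain ⟨d, rfl⟩ : ∃ d', d = d' + 1 := ⟨d - 1, by omega⟩
    rw [Nat.cast_succ, hfac_succ_shift]
    exact add_mem (ih (by omega) hd') (Ideal.mul_mem_left _ _ (ih (by omega) (by omega)))

lemma hfac_add_neg_one_pow_mul_q_mem_Jideal (hkn : k ≤ n) {s : ℕ} (hs : s < k) :
    hfac n k hn n s + (-1) ^ k * C (qvar n) ∈ Jideal n k hn := by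
  induction s with
  | zero => exact Ideal.subset_span (Or.inr (by simp))
  | succ s ih =>
    obtain ⟨n, rfl⟩ := Nat.exists_eq_add_one.mpr hn
    rw [Nat.cast_succ, hfac_succ_shift, add_right_comm]
    exact add_mem (ih (by omega))
      (Ideal.mul_mem_left _ _ (hfac_mem_Jideal hn s (by omega) (by omega)))

end QuantumIdeal

/-- With `0`-based column index `j`, the paper's shift `τ^{1-j}` becomes `τ^{-j}`. -/
def jacobiTrudi (n k : ℕ) (hn : 0 < n) (lam : Fin k → ℕ) :
    Matrix (Fin k) (Fin k) (PolyRing n k) :=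
  Matrix.of fun i j => hzfac n k hn ((lam i : ℤ) + (j : ℕ) - (i : ℕ)) (j : ℕ)

lemma sfac_eq_det_jacobiTrudi (n k : ℕ) (hn : 0 < n) (lam : Fin k → ℕ) :
    sfac n k hn lam = (jacobiTrudi n k hn lam).det :=
  rfl

section JacobiTrudi

variable {n m : ℕ} (hn : 0 < n)

lemma jacobiTrudi_last_of_eq_zero {lam : Fin (m + 1) → ℕ} (hlam : lam (Fin.last m) = 0) :
    jacobiTrudi n (m + 1) hn lam (Fin.last m) = Pi.single (Fin.last m) 1 := by
  ext j
  rcases eq_or_ne j (Fin.last m) with rfl | hj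
  · simp [jacobiTrudi, hlam, hzfac_zero]
  · have hjm : (j : ℕ) < m := Fin.val_lt_last hj
    rw [Pi.single_eq_of_ne hj, jacobiTrudi, Matrix.of_apply, hlam, hzfac_of_neg]
    simp only [Fin.val_last]
    omega

lemma jacobiTrudi_submatrix_succ_castSucc {lam mu : Fin (m + 1) → ℕ}
    (h : ∀ i : Fin m, lam i.succ = mu i.castSucc + 1) :
    (jacobiTrudi n (m + 1) hn lam).submatrix Fin.succ Fin.castSucc =
      (jacobiTrudi n (m + 1) hn mu).submatrix Fin.castSucc Fin.castSucc := by
  refine Matrix.ext fun i j => ?_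
  simp only [jacobiTrudi, Matrix.submatrix_apply, Matrix.of_apply, h, Fin.val_succ,
    Fin.val_castSucc]
  congr 1
  push_cast
  ring

lemma jacobiTrudi_map_mk_zero {lam : Fin (m + 1) → ℕ} (hmn : m + 1 ≤ n)
    (hlam : lam 0 = n - (m + 1) + 1) :
    (jacobiTrudi n (m + 1) hn lam).map (Ideal.Quotient.mk (Jideal n (m + 1) hn)) 0 =
      Pi.single (Fin.last m) ((-1) ^ m * Ideal.Quotient.mk _ (C (qvar n))) := by
  ext j
  have hdeg : (lam 0 : ℤ) + (j : ℕ) - ((0 : Fin (m + 1)) : ℕ) = (n - m + j : ℕ) := by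
    rw [hlam, Fin.val_zero]
    omega
  simp only [Matrix.map_apply, jacobiTrudi, Matrix.of_apply, hdeg, hzfac_natCast]
  rcases eq_or_ne j (Fin.last m) with rfl | hj
  · have hq := Ideal.Quotient.eq_zero_iff_mem.mpr
      (hfac_add_neg_one_pow_mul_q_mem_Jideal hn hmn (s := m) (by omega))
    rw [Fin.val_last, show n - m + m = n by omega, Pi.single_eq_same]
    simp only [map_add, map_mul, map_pow, map_neg, map_one, pow_succ] at hq
    linear_combination hq
  · have hjm : (j : ℕ) < m := Fin.val_lt_last hj
    rw [Pi.single_eq_of_ne hj, Ideal.Quotient.eq_zero_iff_mem]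
    exact hfac_mem_Jideal hn _ (by omega) (by omega)

end JacobiTrudi

theorem sfac_bar_eq_q_sfac_minus_general (n k : ℕ) (hn : 0 < n) (hk : 0 < k) (hkn : k ≤ n)
    (lam : Fin k → ℕ) (hpos : ∀ i, 0 < lam i) :
    sfac n k hn (Function.update lam ⟨0, hk⟩ (n - k + 1)) -
      MvPolynomial.C (qvar n) *
        sfac n k hn (fun i => if h : (i : ℕ) + 1 < k then lam ⟨(i : ℕ) + 1, h⟩ - 1 else 0)
      ∈ Jideal n k hn := by
  obtain ⟨m, rfl⟩ : ∃ m, k = m + 1 := ⟨k - 1, by omega⟩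
  set lamBar := Function.update lam ⟨0, hk⟩ (n - (m + 1) + 1)
  set lamMinus := fun i : Fin (m + 1) =>
    if h : (i : ℕ) + 1 < m + 1 then lam ⟨i + 1, h⟩ - 1 else 0
  have hminor : (jacobiTrudi n (m + 1) hn lamBar).submatrix Fin.succ Fin.castSucc =
      (jacobiTrudi n (m + 1) hn lamMinus).submatrix Fin.castSucc Fin.castSucc :=
    jacobiTrudi_submatrix_succ_castSucc hn fun i => by
      simp only [lamBar, lamMinus, Fin.zero_eta, Fin.val_castSucc,
        dif_pos (Nat.succ_lt_succ i.isLt)]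
      rw [Function.update_of_ne (Fin.succ_ne_zero i)]
      exact (Nat.sub_add_cancel (hpos i.succ)).symm
  have hlast : jacobiTrudi n (m + 1) hn lamMinus (Fin.last m) = Pi.single (Fin.last m) 1 :=
    jacobiTrudi_last_of_eq_zero hn (by simp [lamMinus])
  have hfirst := jacobiTrudi_map_mk_zero hn hkn (lam := lamBar) (by simp [lamBar])
  rw [sfac_eq_det_jacobiTrudi, sfac_eq_det_jacobiTrudi, ← Ideal.Quotient.eq, map_mul,
    Matrix.det_eq_of_row_last_eq_single _ hlast, ← hminor]
  exact RingHom.map_det_eq_of_map_row_zero_eq_single (Ideal.Quotient.mk _) _ hfirst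

/-- For `λ` with `λ₁ = n-k` and all parts positive, with
`λ̄ = (n-k+1, λ₂, …, λ_k)` and `λ⁻ = (λ₂-1, …, λ_k-1, 0)`, one has
`s_{λ̄}(x|t) ≡ q ⬝ s_{λ⁻}(x|t) mod J`. -/
theorem sfac_bar_eq_q_sfac_minus (n k : ℕ) (hn : 0 < n) (hk : 0 < k) (hkn : k ≤ n)
    (lam : Fin k → ℕ) (hpart : Antitone lam)
    (htop : lam ⟨0, hk⟩ = n - k) (hpos : ∀ i, 0 < lam i) :
    sfac n k hn (Function.update lam ⟨0, hk⟩ (n - k + 1)) -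
      MvPolynomial.C (qvar n) *
        sfac n k hn (fun i => if h : (i : ℕ) + 1 < k then lam ⟨(i : ℕ) + 1, h⟩ - 1 else 0)
      ∈ Jideal n k hn :=
  sfac_bar_eq_q_sfac_minus_general n k hn hk hkn lam hpos
end
end

section
/- In the non-equivariant quotient Q = ℤ[q][x₁,...,x_k]^{S_k}/⟨h_{n−k+1}, ..., h_{n−1}, h_n + (−1)^k q⟩, the complete homogeneous symmetric polynomials satisfy h_{nd+j} ≡ (−1)^{d(k−1)} q^d h_j for all d ≥ 0 and 0 ≤ j ≤ n−1. -/
/-!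
Since `∏ᵢ (1 - xᵢ t) · ∑ₘ hₘ tᵐ = 1`, the sequence `(hₘ)` (extended by `0` to negative `m`)
satisfies a linear recurrence of order `k` with coefficients independent of `m`. Modulo the ideal,
`m ↦ h_{n+m}` and `m ↦ (-1)^(k-1) q hₘ` satisfy this same recurrence and have the same `k` initial
values `h_{n-k+1}, …, h_{n-1}, h_n ≡ 0, …, 0, (-1)^(k-1) q`, so they agree; iterating the shift by
`n` gives the theorem.
-/

noncomputable section

/-- The ring `ℤ[q][x₁, …, x_k]`. -/
abbrev QPoly (k : ℕ) := MvPolynomial (Fin k) (Polynomial ℤ)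

/-- The quantum parameter `q`. -/
def qq (k : ℕ) : QPoly k := MvPolynomial.C Polynomial.X

/-- The complete homogeneous symmetric polynomial `h_m` in `x₁, …, x_k`. -/
def hcomp (k m : ℕ) : QPoly k :=
  ∑ f ∈ Finset.univ.filter (fun f : Fin m → Fin k => ∀ a b : Fin m, a ≤ b → f a ≤ f b),
    ∏ j : Fin m, MvPolynomial.X (f j)

/-- `hcomp` extended to integer degrees (zero in negative degrees). -/
def hzcomp (k : ℕ) (m : ℤ) : QPoly k := if 0 ≤ m then hcomp k m.toNat else 0

/-- The quantum ideal `⟨h_{n-k+1}, …, h_{n-1}, h_n + (-1)^k q⟩`. -/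
def Jq (n k : ℕ) : Ideal (QPoly k) :=
  Ideal.span
    (((hcomp k) '' {m : ℕ | n - k + 1 ≤ m ∧ m ≤ n - 1}) ∪
      {hcomp k n + (-1 : QPoly k) ^ k * qq k})

/-- The Schur polynomial of `lam` (parts indexed from 1) via the Jacobi–Trudi
formula `s_λ = det (h_{λ_i + j - i})_{1 ≤ i,j ≤ k}`. -/
def schurJT (k : ℕ) (lam : ℕ → ℕ) : QPoly k :=
  Matrix.det (Matrix.of fun i j : Fin k =>
    hzcomp k ((lam ((i : ℕ) + 1) : ℤ) + ((j : ℕ) : ℤ) - ((i : ℕ) : ℤ)))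

open Finset

section Recurrence

variable {R : Type*} [CommRing R]

theorem apply_add_eq_mul_of_recurrence {e h : ℕ → R} {n k : ℕ}
    (he₀ : e 0 = 1) (he : ∀ r, k < r → e r = 0)
    (hrec : ∀ s, 0 < s → ∑ r ∈ range (s + 1), e r * h (s - r) = 0)
    (hk : k ≤ n) (hgap : ∀ m, n - k + 1 ≤ m → m ≤ n - 1 → h m = 0)
    {a : R} (ha : h n = a * h 0) (m : ℕ) : h (n + m) = a * h m := by
  induction m using Nat.strong_induction_on with
  | _ m ih =>
  rcases m.eq_zero_or_pos with rfl | hm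
  · exact ha
  -- the terms with `m < r ≤ k` only involve `h` on the gap `[n - k + 1, n - 1]`
  have htail : ∑ r ∈ range (m + 1), e r * h (n + m - r)
      = ∑ r ∈ range (n + m + 1), e r * h (n + m - r) := by
    refine sum_subset (range_subset_range.2 (by omega)) fun r hr hr' => ?_
    simp only [mem_range, not_lt] at hr hr'
    rcases lt_or_ge k r with hkr | hrk
    · rw [he r hkr, zero_mul]
    · rw [hgap _ (by omega) (by omega), mul_zero]
  have hshift : ∀ r ∈ range m, e (r + 1) * h (n + m - (r + 1))
      = a * (e (r + 1) * h (m - (r + 1))) := fun r hr => by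
    rw [mem_range] at hr
    rw [show n + m - (r + 1) = n + (m - (r + 1)) by omega, ih _ (by omega)]
    ring
  have h₁ := hrec (n + m) (by omega)
  have h₂ := hrec m hm
  rw [← htail, sum_range_succ', sum_congr rfl hshift, ← mul_sum, he₀] at h₁
  rw [sum_range_succ', he₀] at h₂
  simp only [Nat.sub_zero, one_mul] at h₁ h₂
  linear_combination h₁ - a * h₂

theorem apply_mul_add_eq_pow_mul {h : ℕ → R} {n : ℕ} {a : R}
    (hstep : ∀ m, h (n + m) = a * h m) (d j : ℕ) : h (n * d + j) = a ^ d * h j := by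
  induction d with
  | zero => simp
  | succ d ih => rw [show n * (d + 1) + j = n + (n * d + j) by ring, hstep, ih, pow_succ']; ring

end Recurrence

theorem PowerSeries.one_sub_C_mul_X_mul_mk_pow {R : Type*} [CommRing R] (a : R) :
    (1 - C a * X) * mk (fun n => a ^ n) = 1 := by
  have h := congrArg (rescale a) (mk_one_mul_one_sub_eq_one R)
  rw [map_mul, map_sub, map_one, rescale_X, rescale_mk] at h
  simpa [mul_comm] using h

theorem List.ofFn_get_cast {α : Type*} {m : ℕ} (l : List α) (h : m = l.length) :
    List.ofFn (fun i : Fin m => l.get (i.cast h)) = l :=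
  List.ext_get (by simp [h]) fun _ _ _ => by simp

def Sym.equivMonotone (α : Type*) [LinearOrder α] (m : ℕ) :
    {f : Fin m → α // Monotone f} ≃ Sym α m where
  toFun f := ⟨List.ofFn f.1, by simp⟩
  invFun s := ⟨fun i => (s.1.sort (· ≤ ·)).get (i.cast (by simp)),
    fun _ _ hij => (s.1.pairwise_sort _).rel_get_of_le hij⟩
  left_inv f := by
    have hsort : (↑(List.ofFn f.1) : Multiset α).sort (· ≤ ·) = List.ofFn f.1 := by
      rw [Multiset.coe_sort]
      exact List.mergeSort_eq_self _ (List.pairwise_ofFn.2 fun _ _ hij => f.2 hij.le)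
    apply Subtype.ext
    apply List.ofFn_injective
    exact (List.ofFn_get_cast _ _).trans hsort
  right_inv s := by
    ext1
    exact (congrArg _ (List.ofFn_get_cast _ _)).trans (s.1.sort_eq _)

namespace MvPolynomial

variable (σ R : Type*) [CommRing R] [Fintype σ]

/-- The `r`-th coefficient is `(-1)ʳ esymm σ R r`, so `sum_coeff_hsymmGenDenom_mul_hsymm` is the
identity `∑ᵣ (-1)ʳ eᵣ h_{s-r} = 0`. -/
def hsymmGenDenom : Polynomial (MvPolynomial σ R) :=
  ∏ i : σ, (1 - Polynomial.C (X i) * Polynomial.X)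

theorem coeff_zero_hsymmGenDenom : (hsymmGenDenom σ R).coeff 0 = 1 := by
  simp [hsymmGenDenom, Polynomial.coeff_zero_eq_eval_zero, Polynomial.eval_prod]

theorem coeff_hsymmGenDenom_of_card_lt {r : ℕ} (hr : Fintype.card σ < r) :
    (hsymmGenDenom σ R).coeff r = 0 := by
  refine Polynomial.coeff_eq_zero_of_natDegree_lt (lt_of_le_of_lt ?_ hr)
  refine (Polynomial.natDegree_prod_le _ _).trans ?_
  simpa using sum_le_card_nsmul univ _ 1 fun i _ => (Polynomial.natDegree_sub_le _ _).trans
    (by simpa using (Polynomial.natDegree_C_mul_le _ _).trans Polynomial.natDegree_X_le)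

variable [DecidableEq σ]

theorem mk_hsymm :
    PowerSeries.mk (hsymm σ R) = ∏ i, PowerSeries.mk fun n => (X i : MvPolynomial σ R) ^ n := by
  refine PowerSeries.ext fun n => ?_
  simp only [PowerSeries.coeff_mk, PowerSeries.coeff_prod, hsymm]
  refine sum_bij' (fun (s : Sym σ n) _ => Multiset.toFinsupp s.1)
    (fun l hl => ⟨Finsupp.toMultiset l, by
      simpa [Finsupp.card_toMultiset, Finsupp.sum_fintype] using (mem_finsuppAntidiag.1 hl).1⟩)
    (fun s _ => mem_finsuppAntidiag.2
      ⟨(Multiset.sum_count_eq_card fun a _ => mem_univ a).trans s.2, subset_univ _⟩)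
    (fun _ _ => mem_univ _) (fun s _ => Sym.coe_injective (by simp)) (fun l _ => by simp)
    (fun s _ => ?_)
  rw [prod_multiset_map_count]
  exact prod_subset (subset_univ _) fun i _ hi => by simp_all

theorem hsymmGenDenom_mul_mk_hsymm :
    (hsymmGenDenom σ R : PowerSeries (MvPolynomial σ R)) * PowerSeries.mk (hsymm σ R) = 1 := by
  rw [hsymmGenDenom, ← Polynomial.coeToPowerSeries.ringHom_apply, map_prod, mk_hsymm,
    ← prod_mul_distrib]
  refine prod_eq_one fun i _ => ?_
  simpa [Polynomial.coeToPowerSeries.ringHom_apply] using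
    PowerSeries.one_sub_C_mul_X_mul_mk_pow (X i : MvPolynomial σ R)

theorem sum_coeff_hsymmGenDenom_mul_hsymm {s : ℕ} (hs : 0 < s) :
    ∑ r ∈ range (s + 1), (hsymmGenDenom σ R).coeff r * hsymm σ R (s - r) = 0 := by
  have h := congrArg (PowerSeries.coeff s) (hsymmGenDenom_mul_mk_hsymm σ R)
  rw [PowerSeries.coeff_mul, Finset.Nat.sum_antidiagonal_eq_sum_range_succ
    (fun i j => PowerSeries.coeff i _ * PowerSeries.coeff j _), PowerSeries.coeff_one,
    if_neg hs.ne'] at h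
  simpa only [Polynomial.coeff_coe, PowerSeries.coeff_mk] using h

end MvPolynomial

theorem hcomp_eq_hsymm (k m : ℕ) : hcomp k m = MvPolynomial.hsymm (Fin k) (Polynomial ℤ) m := by
  rw [hcomp, MvPolynomial.hsymm, sum_subtype _ (p := Monotone) (fun f => by simp [Monotone]),
    ← (Sym.equivMonotone (Fin k) m).sum_comp]
  refine Fintype.sum_congr _ _ fun f => ?_
  change _ = ((List.ofFn f.1 : Multiset (Fin k)).map _).prod
  rw [Multiset.map_coe, Multiset.prod_coe, List.map_ofFn, List.prod_ofFn]
  rfl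

theorem hcomp_mem_Jq {n k m : ℕ} (h₁ : n - k + 1 ≤ m) (h₂ : m ≤ n - 1) : hcomp k m ∈ Jq n k :=
  Ideal.subset_span (Set.mem_union_left _ ⟨m, ⟨h₁, h₂⟩, rfl⟩)

theorem hcomp_sub_mem_Jq {n k : ℕ} (hn : 0 < n) :
    hcomp k n - (-1 : QPoly k) ^ (k - 1) * qq k ∈ Jq n k := by
  have hgen : hcomp k n + (-1 : QPoly k) ^ k * qq k ∈ Jq n k :=
    Ideal.subset_span (Set.mem_union_right _ rfl)
  cases k with
  | zero =>
    obtain ⟨n, rfl⟩ := Nat.exists_eq_add_of_lt hn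
    have h₀ : hcomp 0 (n + 1) = 0 := by simp [hcomp]
    simpa [h₀] using neg_mem hgen
  | succ k =>
    convert hgen using 1
    rw [Nat.add_sub_cancel, pow_succ]
    ring

theorem mk_hcomp_add {n k : ℕ} (hn : 0 < n) (hk : k ≤ n) (m : ℕ) :
    Ideal.Quotient.mk (Jq n k) (hcomp k (n + m)) =
      Ideal.Quotient.mk (Jq n k) ((-1) ^ (k - 1) * qq k) * Ideal.Quotient.mk (Jq n k) (hcomp k m) :=
  let π := Ideal.Quotient.mk (Jq n k)
  apply_add_eq_mul_of_recurrence
    (e := fun r => π ((MvPolynomial.hsymmGenDenom (Fin k) (Polynomial ℤ)).coeff r))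
    (h := fun m => π (hcomp k m))
    (by rw [MvPolynomial.coeff_zero_hsymmGenDenom, map_one])
    (fun r hr => by
      rw [MvPolynomial.coeff_hsymmGenDenom_of_card_lt _ _ ((Fintype.card_fin k).trans_lt hr),
        map_zero])
    (fun s hs => by
      simpa only [map_sum, map_mul, map_zero, hcomp_eq_hsymm] using
        congrArg π (MvPolynomial.sum_coeff_hsymmGenDenom_mul_hsymm _ _ hs))
    hk (fun m h₁ h₂ => Ideal.Quotient.eq_zero_iff_mem.2 (hcomp_mem_Jq h₁ h₂))
    (by
      rw [hcomp_eq_hsymm k 0, MvPolynomial.hsymm_zero, map_one, mul_one]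
      exact Ideal.Quotient.eq.2 (hcomp_sub_mem_Jq hn))
    m

/-- In `Q = ℤ[q][x₁,…,x_k]^{S_k}/⟨h_{n-k+1}, …, h_{n-1}, h_n + (-1)^k q⟩`:
`h_{nd+j} ≡ (-1)^{d(k-1)} q^d h_j` for all `d ≥ 0` and `0 ≤ j ≤ n-1`. -/
theorem hcomp_high_degree_reduction (n k : ℕ) (hn : 0 < n) (hk : k ≤ n) :
    ∀ d : ℕ, ∀ j : ℕ, j ≤ n - 1 →
      hcomp k (n * d + j) -
        (-1 : QPoly k) ^ (d * (k - 1)) * (qq k) ^ d * hcomp k j ∈ Jq n k := by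
  intro d j _
  rw [← Ideal.Quotient.eq, mul_comm d, pow_mul, ← mul_pow]
  simpa using apply_mul_add_eq_pow_mul
    (h := fun m => Ideal.Quotient.mk (Jq n k) (hcomp k m)) (mk_hcomp_add hn hk) d j
end
end
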